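/- arXiv:1605.07417 — 3 statements merged into one kernel-verified Lean document; each statement's English description precedes it below -/
import Mathlib

section
/- Let p ∈ P. Let U be an inclusion-minimal subset of P ∖ F(≥p) that is an upper bound set for J(<p), and let D be an inclusion-minimal subset of P ∖ J(≤p) that is a lower bound set for F(>p). Suppose there is no pair r ∈ D, s ∈ U with r ≤ s. Then there exists an S-module homomorphism φ: L(2,P) → S/L(2,P) sending the generator p_1 p_2 to the class of the monomial ∏_{r∈D} r_1 · ∏_{s∈U} s_2 and sending every other minimal monomial generator p'_1 q'_2 of L(2,P) to 0, and this homomorphism φ is nonzero. -/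
set_option linter.unusedSectionVars false
open scoped Classical

noncomputable section

namespace LP2

variable (k : Type) [Field k] (P : Type) [Fintype P] [PartialOrder P]

/-- The polynomial ring `S = k[x_{[2]×P}]`; `p₁ = X (0,p)` and `p₂ = X (1,p)`. -/
abbrev SR := MvPolynomial (Fin 2 × P) k

/-- The quadratic letterplace ideal `L(2,P)`, generated by the monomials `p₁ q₂`
for all pairs `p ≤ q` in `P`. -/
def L2P : Ideal (SR k P) :=
  Ideal.span {f | ∃ p q : P, p ≤ q ∧
    f = MvPolynomial.X ((0 : Fin 2), p) * MvPolynomial.X ((1 : Fin 2), q)}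

lemma gen_mem_L2P {p q : P} (h : p ≤ q) :
    MvPolynomial.X ((0 : Fin 2), p) * MvPolynomial.X ((1 : Fin 2), q) ∈ L2P k P :=
  Ideal.subset_span ⟨p, q, h, rfl⟩


open MvPolynomial

lemma monomial_div (u e : (Fin 2 × P) →₀ ℕ) (r : k) :
    (MvPolynomial.monomial u r : SR k P).divMonomial e =
      if e ≤ u then MvPolynomial.monomial (u - e) r else 0 := by
  ext c
  rw [coeff_divMonomial]
  split_ifs with h
  · rw [coeff_monomial, coeff_monomial]
    congr 1
    apply propext
    constructor
    · rintro rfl; simp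
    · rintro rfl; rw [add_tsub_cancel_of_le h]
  · rw [coeff_monomial, coeff_zero]
    rw [if_neg]
    rintro rfl
    exact h (le_add_right le_rfl)

lemma X_mul_X' (a b : Fin 2 × P) :
    (MvPolynomial.X a * MvPolynomial.X b : SR k P) =
      MvPolynomial.monomial (Finsupp.single a 1 + Finsupp.single b 1) 1 := by
  rw [X, X, monomial_mul, one_mul]

lemma L2P_eq : L2P k P = Ideal.span ((fun s => MvPolynomial.monomial s (1:k)) ''
    {s | ∃ p q : P, p ≤ q ∧
      s = Finsupp.single ((0:Fin 2),p) 1 + Finsupp.single ((1:Fin 2),q) 1}) := by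
  unfold L2P
  congr 1
  ext f
  constructor
  · rintro ⟨p, q, h, rfl⟩
    exact ⟨_, ⟨p, q, h, rfl⟩, (X_mul_X' k P _ _).symm⟩
  · rintro ⟨s, ⟨p, q, h, rfl⟩, rfl⟩
    exact ⟨p, q, h, (X_mul_X' k P _ _).symm⟩

lemma pair_apply (p q : P) (x : Fin 2 × P) :
    ((Finsupp.single ((0:Fin 2),p) 1 + Finsupp.single ((1:Fin 2),q) 1 : (Fin 2 × P) →₀ ℕ)) x =
      (if x = ((0:Fin 2),p) then 1 else 0) + (if x = ((1:Fin 2),q) then 1 else 0) := by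
  rw [Finsupp.add_apply, Finsupp.single_apply, Finsupp.single_apply]
  simp [eq_comm]

lemma pair_le_iff (p q : P) (a : (Fin 2 × P) →₀ ℕ) :
    (Finsupp.single ((0:Fin 2),p) 1 + Finsupp.single ((1:Fin 2),q) 1) ≤ a ↔
      1 ≤ a ((0:Fin 2),p) ∧ 1 ≤ a ((1:Fin 2),q) := by
  rw [Finsupp.le_def]
  constructor
  · intro h
    refine ⟨?_, ?_⟩
    · have := h ((0:Fin 2),p); rwa [pair_apply, if_pos rfl, if_neg (by simp), add_zero] at this
    · have := h ((1:Fin 2),q); rwa [pair_apply, if_neg (by simp), if_pos rfl, zero_add] at this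
  · rintro ⟨h1, h2⟩ x
    rw [pair_apply]
    split_ifs with hx hy hy
    · subst hx; exact absurd hy (by simp)
    · subst hx; omega
    · subst hy; omega
    · omega

lemma mono_mem_iff (a : (Fin 2 × P) →₀ ℕ) :
    (MvPolynomial.monomial a (1:k) : SR k P) ∈ L2P k P ↔
      ∃ p q : P, p ≤ q ∧ 1 ≤ a ((0:Fin 2),p) ∧ 1 ≤ a ((1:Fin 2),q) := by
  rw [L2P_eq, mem_ideal_span_monomial_image]
  rw [support_monomial, if_neg one_ne_zero]
  constructor
  · intro h
    obtain ⟨s, ⟨p, q, hpq, rfl⟩, hs⟩ := h a (Finset.mem_singleton_self a)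
    exact ⟨p, q, hpq, (pair_le_iff P p q _).mp hs⟩
  · rintro ⟨p, q, hpq, h1, h2⟩ xi hxi
    rw [Finset.mem_singleton] at hxi
    subst hxi
    exact ⟨_, ⟨p, q, hpq, rfl⟩, (pair_le_iff P p q _).mpr ⟨h1, h2⟩⟩

def dd (D U : Finset P) : (Fin 2 × P) →₀ ℕ :=
  (∑ r ∈ D, Finsupp.single ((0:Fin 2),r) 1) + ∑ s ∈ U, Finsupp.single ((1:Fin 2),s) 1

def ee (p : P) : (Fin 2 × P) →₀ ℕ :=
  Finsupp.single ((0:Fin 2),p) 1 + Finsupp.single ((1:Fin 2),p) 1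

lemma sum_single_apply (i : Fin 2) (T : Finset P) (x : Fin 2 × P) :
    (∑ t ∈ T, Finsupp.single ((i:Fin 2),t) 1) x = if x.1 = i ∧ x.2 ∈ T then 1 else 0 := by
  classical
  induction T using Finset.induction with
  | empty => simp
  | insert _ _ hnot ih =>
    rename_i t T'
    rw [Finset.sum_insert hnot, Finsupp.add_apply, ih, Finsupp.single_apply]
    rcases x with ⟨x1, x2⟩
    simp only [Finset.mem_insert, Prod.mk.injEq]
    by_cases h1 : x1 = i
    · subst h1
      by_cases h2 : x2 = t
      · subst h2
        rw [if_pos ⟨rfl, rfl⟩, if_neg (fun h => hnot h.2), if_pos ⟨rfl, Or.inl rfl⟩]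
      · rw [if_neg (fun h => h2 h.2.symm)]
        by_cases h3 : x2 ∈ T'
        · rw [if_pos ⟨rfl, h3⟩, if_pos ⟨rfl, Or.inr h3⟩, zero_add]
        · rw [if_neg (fun h => h3 h.2), if_neg (fun h => (h.2.elim h2 h3))]
    · rw [if_neg (fun h => h1 h.1.symm), if_neg (fun h => h1 h.1), if_neg (fun h => h1 h.1)]

lemma dd_apply (D U : Finset P) (x : Fin 2 × P) :
    dd P D U x = (if x.1 = 0 ∧ x.2 ∈ D then 1 else 0) + (if x.1 = 1 ∧ x.2 ∈ U then 1 else 0) := by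
  rw [dd, Finsupp.add_apply, sum_single_apply, sum_single_apply]

lemma ee_apply (p : P) (x : Fin 2 × P) :
    ee P p x = (if x = ((0:Fin 2),p) then 1 else 0) + (if x = ((1:Fin 2),p) then 1 else 0) :=
  pair_apply P p p x

lemma key_mem (p : P) (D U : Finset P)
    (hU2 : ∀ r : P, r < p → ∃ s ∈ U, r ≤ s)
    (hD2 : ∀ q : P, p < q → ∃ r ∈ D, r ≤ q)
    (a b : (Fin 2 × P) →₀ ℕ)
    (ha : ∃ p' q' : P, p' ≤ q' ∧ 1 ≤ a ((0:Fin 2),p') ∧ 1 ≤ a ((1:Fin 2),q'))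
    (hea : ¬ ee P p ≤ a) (heab : ee P p ≤ b + a) :
    (MvPolynomial.monomial (dd P D U + (b + a - ee P p)) (1:k) : SR k P) ∈ L2P k P := by
  rw [mono_mem_iff]
  obtain ⟨p', q', hpq, h0, h1⟩ := ha
  set c : (Fin 2 × P) →₀ ℕ := b + a - ee P p with hc
  have hcval : ∀ x, c x = b x + a x - ee P p x := by
    intro x; rw [hc, Finsupp.tsub_apply, Finsupp.add_apply]
  have heabv : ∀ x, ee P p x ≤ b x + a x := Finsupp.le_def.mp heab
  -- from hea : some coordinate of a is too small
  have hea' : a ((0:Fin 2),p) = 0 ∨ a ((1:Fin 2),p) = 0 := by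
    by_contra hcon
    push_neg at hcon
    exact hea (Finsupp.le_def.mpr (fun x => by
      rw [ee_apply]
      split_ifs with hx hy hy
      · subst hx; exact absurd hy (by simp)
      · subst hx; omega
      · subst hy; omega
      · omega))
  have hdd : ∀ x, (dd P D U + c) x = dd P D U x + c x := fun x => Finsupp.add_apply _ _ _
  by_cases hc0 : 1 ≤ c ((0:Fin 2),p')
  · by_cases hc1 : 1 ≤ c ((1:Fin 2),q')
    · exact ⟨p', q', hpq, by rw [hdd]; omega, by rw [hdd]; omega⟩
    · -- c (1,q') = 0 : forces q' = p
      have hq' : q' = p := by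
        by_contra hne
        have := hcval ((1:Fin 2),q')
        rw [ee_apply] at this
        simp [hne, Prod.ext_iff] at this
        omega
      subst hq'
      have hap0 : a ((0:Fin 2),q') = 0 := by
        rcases hea' with h | h
        · exact h
        · omega
      have hp'lt : p' < q' := lt_of_le_of_ne hpq (by rintro rfl; omega)
      obtain ⟨s, hsU, hps⟩ := hU2 p' hp'lt
      refine ⟨p', s, hps, by rw [hdd]; omega, ?_⟩
      rw [hdd, dd_apply]
      simp only [hsU]
      norm_num
  · -- c (0,p') = 0 : forces p' = p
    have hp' : p' = p := by
      by_contra hne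
      have := hcval ((0:Fin 2),p')
      rw [ee_apply] at this
      simp [hne, Prod.ext_iff] at this
      omega
    subst hp'
    have hap1 : a ((1:Fin 2),p') = 0 := by
      rcases hea' with h | h
      · omega
      · exact h
    have hplt : p' < q' := lt_of_le_of_ne hpq (by rintro rfl; omega)
    obtain ⟨r, hrD, hrq⟩ := hD2 q' hplt
    refine ⟨r, q', hrq, ?_, ?_⟩
    · rw [hdd, dd_apply]
      simp only [hrD]
      norm_num
    · have hqne : q' ≠ p' := ne_of_gt hplt
      have := hcval ((1:Fin 2),q')
      rw [ee_apply] at this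
      simp [hqne, Prod.ext_iff] at this
      rw [hdd]
      omega

lemma M_eq (D U : Finset P) :
    ((∏ r ∈ D, MvPolynomial.X ((0:Fin 2), r)) * ∏ s ∈ U, MvPolynomial.X ((1:Fin 2), s) : SR k P)
      = MvPolynomial.monomial (dd P D U) 1 := by
  have h : ∀ (i : Fin 2) (T : Finset P),
      (∏ t ∈ T, MvPolynomial.X ((i:Fin 2), t) : SR k P)
        = MvPolynomial.monomial (∑ t ∈ T, Finsupp.single ((i:Fin 2),t) 1) 1 := by
    intro i T
    induction T using Finset.induction with
    | empty => simp
    | insert _ _ hnot ih =>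
      rename_i t T'
      rw [Finset.prod_insert hnot, Finset.sum_insert hnot, ih, X, monomial_mul, one_mul]
  rw [h, h, monomial_mul, one_mul, dd]

lemma key_eq (p : P) (D U : Finset P)
    (hU2 : ∀ r : P, r < p → ∃ s ∈ U, r ≤ s)
    (hD2 : ∀ q : P, p < q → ∃ r ∈ D, r ≤ q)
    (a b : (Fin 2 × P) →₀ ℕ)
    (ha : (MvPolynomial.monomial a (1:k) : SR k P) ∈ L2P k P) :
    Ideal.Quotient.mk (L2P k P)
        (MvPolynomial.monomial (dd P D U) 1 *
          ((MvPolynomial.monomial b (1:k) * MvPolynomial.monomial a 1).divMonomial (ee P p))) =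
      Ideal.Quotient.mk (L2P k P)
        (MvPolynomial.monomial b (1:k) *
          (MvPolynomial.monomial (dd P D U) 1 *
            (MvPolynomial.monomial a (1:k)).divMonomial (ee P p))) := by
  rw [monomial_mul (R := k), one_mul, monomial_div, monomial_div]
  by_cases hA : ee P p ≤ a
  · rw [if_pos hA, if_pos (le_trans hA (by exact le_add_self))]
    have hexp : dd P D U + (b + a - ee P p) = b + (dd P D U + (a - ee P p)) := by
      rw [add_tsub_assoc_of_le hA, add_left_comm]
    simp only [monomial_mul, one_mul]
    rw [hexp]
  · rw [if_neg hA]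
    by_cases hAB : ee P p ≤ b + a
    · rw [if_pos hAB]
      rw [monomial_mul, one_mul]
      rw [mul_zero, mul_zero, map_zero]
      rw [Ideal.Quotient.eq_zero_iff_mem]
      exact key_mem k P p D U hU2 hD2 a b ((mono_mem_iff k P a).mp ha) hA hAB
    · rw [if_neg hAB, mul_zero, mul_zero]

lemma C_mul_divMonomial' (r : k) (x : SR k P) (e : (Fin 2 × P) →₀ ℕ) :
    (MvPolynomial.C r * x).divMonomial e = MvPolynomial.C r * x.divMonomial e := by
  ext c
  rw [coeff_divMonomial, coeff_C_mul, coeff_C_mul, coeff_divMonomial]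

set_option maxHeartbeats 1000000 in
set_option synthInstance.maxHeartbeats 200000 in
lemma smul_compat (p : P) (D U : Finset P)
    (hU2 : ∀ r : P, r < p → ∃ s ∈ U, r ≤ s)
    (hD2 : ∀ q : P, p < q → ∃ r ∈ D, r ≤ q)
    (s f : SR k P) (hf : f ∈ L2P k P) :
    Ideal.Quotient.mk (L2P k P)
        (MvPolynomial.monomial (dd P D U) 1 * ((s * f).divMonomial (ee P p))) =
      Ideal.Quotient.mk (L2P k P)
        (s * (MvPolynomial.monomial (dd P D U) 1 * (f.divMonomial (ee P p)))) := by
  induction hf using Submodule.span_induction generalizing s with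
  | mem g hg =>
    obtain ⟨p', q', hpq, rfl⟩ := hg
    rw [X_mul_X' k P]
    set w : (Fin 2 × P) →₀ ℕ :=
      Finsupp.single ((0:Fin 2),p') 1 + Finsupp.single ((1:Fin 2),q') 1 with hw
    have hwmem : (MvPolynomial.monomial w (1:k) : SR k P) ∈ L2P k P := by
      rw [hw, ← X_mul_X']; exact gen_mem_L2P k P hpq
    induction s using MvPolynomial.induction_on' with
    | monomial b r =>
      have hmono : (MvPolynomial.monomial b r : SR k P) = MvPolynomial.C r *
          MvPolynomial.monomial b 1 := by rw [C_mul_monomial, mul_one]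
      have base := key_eq k P p D U hU2 hD2 w b hwmem
      have hL : ((MvPolynomial.monomial b r * MvPolynomial.monomial w 1 : SR k P)).divMonomial
          (ee P p) = MvPolynomial.C r *
            ((MvPolynomial.monomial b 1 * MvPolynomial.monomial w 1 : SR k P)).divMonomial
              (ee P p) := by
        rw [← C_mul_divMonomial']
        congr 1
        rw [hmono]; ring
      rw [hL, hmono]
      simp only [map_mul] at base ⊢
      linear_combination (Ideal.Quotient.mk (L2P k P) (MvPolynomial.C r)) * base
    | add s₁ s₂ ih1 ih2 =>
      rw [add_mul, add_divMonomial, mul_add, map_add, ih1, ih2, add_mul, map_add]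
  | zero => simp
  | add f g hfm hgm ih1 ih2 =>
    rw [mul_add, add_divMonomial, mul_add, map_add, ih1, ih2, add_divMonomial, mul_add,
      mul_add, map_add]
  | smul c f hfm ih =>
    rw [smul_eq_mul, ← mul_assoc, ih (s * c)]
    have h2 := ih c
    have h3 := congrArg (fun z => Ideal.Quotient.mk (L2P k P) s * z) h2
    simp only [← map_mul] at h3
    rw [h3]
    congr 1
    ring

set_option maxHeartbeats 1000000 in
set_option synthInstance.maxHeartbeats 400000 in
/-- Let `p ∈ P`, let `U` be an inclusion-minimal subset of
`P ∖ F(≥p)` which is an upper bound set for `J(<p)`, and `D` an inclusion-minimal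
subset of `P ∖ J(≤p)` which is a lower bound set for `F(>p)`; assume no `r ∈ D`,
`s ∈ U` satisfy `r ≤ s`.  Then there is a nonzero `S`-module homomorphism
`φ : L(2,P) → S/L(2,P)` with `φ(p₁p₂) = ∏_{r∈D} r₁ ∏_{s∈U} s₂` and `φ` zero on all
other minimal monomial generators of `L(2,P)`. -/
theorem cotangent_generator_exists (p : P) (D U : Finset P)
    (hU1 : ∀ s ∈ U, ¬ p ≤ s)
    (hU2 : ∀ r : P, r < p → ∃ s ∈ U, r ≤ s)
    (hUmin : ∀ U' ⊆ U, (∀ r : P, r < p → ∃ s ∈ U', r ≤ s) → U' = U)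
    (hD1 : ∀ r ∈ D, ¬ r ≤ p)
    (hD2 : ∀ q : P, p < q → ∃ r ∈ D, r ≤ q)
    (hDmin : ∀ D' ⊆ D, (∀ q : P, p < q → ∃ r ∈ D', r ≤ q) → D' = D)
    (hDU : ∀ r ∈ D, ∀ s ∈ U, ¬ r ≤ s) :
    ∃ φ : (L2P k P : Submodule (SR k P) (SR k P)) →ₗ[SR k P] (SR k P ⧸ L2P k P),
      φ ⟨MvPolynomial.X ((0 : Fin 2), p) * MvPolynomial.X ((1 : Fin 2), p),
          gen_mem_L2P k P le_rfl⟩ =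
        Ideal.Quotient.mk (L2P k P)
          ((∏ r ∈ D, MvPolynomial.X ((0 : Fin 2), r)) *
            ∏ s ∈ U, MvPolynomial.X ((1 : Fin 2), s)) ∧
      (∀ (p' q' : P) (h' : p' ≤ q'), ¬ (p' = p ∧ q' = p) →
        φ ⟨MvPolynomial.X ((0 : Fin 2), p') * MvPolynomial.X ((1 : Fin 2), q'),
            gen_mem_L2P k P h'⟩ = 0) ∧
      φ ≠ 0 := by
  classical
  set φ : (L2P k P : Submodule (SR k P) (SR k P)) →ₗ[SR k P] (SR k P ⧸ L2P k P) :=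
    { toFun := fun x => Ideal.Quotient.mk (L2P k P)
        (MvPolynomial.monomial (dd P D U) 1 * ((x : SR k P).divMonomial (ee P p)))
      map_add' := by
        intro x y
        rw [Submodule.coe_add, add_divMonomial, mul_add, map_add]
      map_smul' := by
        intro c x
        rw [RingHom.id_apply, SetLike.val_smul, smul_eq_mul,
          smul_compat k P p D U hU2 hD2 c (x : SR k P) x.2,
          ← smul_eq_mul]
        simp only [← Ideal.Quotient.mk_eq_mk]
        rw [← Submodule.Quotient.mk_smul] } with hphi
  have hval : φ ⟨MvPolynomial.X ((0 : Fin 2), p) * MvPolynomial.X ((1 : Fin 2), p),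
      gen_mem_L2P k P le_rfl⟩ = Ideal.Quotient.mk (L2P k P)
        (MvPolynomial.monomial (dd P D U) 1) := by
    show Ideal.Quotient.mk (L2P k P)
        (MvPolynomial.monomial (dd P D U) 1 *
          MvPolynomial.divMonomial
            (MvPolynomial.X ((0 : Fin 2), p) * MvPolynomial.X ((1 : Fin 2), p) : SR k P)
            (ee P p)) = _
    rw [X_mul_X' k P, ← ee]
    rw [MvPolynomial.divMonomial_monomial, mul_one]
  refine ⟨φ, ?_, ?_, ?_⟩
  · rw [hval, M_eq k P D U]
  · intro p' q' h' hne
    show Ideal.Quotient.mk (L2P k P)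
        (MvPolynomial.monomial (dd P D U) 1 *
          MvPolynomial.divMonomial
            (MvPolynomial.X ((0 : Fin 2), p') * MvPolynomial.X ((1 : Fin 2), q') : SR k P)
            (ee P p)) = 0
    rw [X_mul_X' k P, monomial_div]
    rw [if_neg, mul_zero, map_zero]
    intro hle
    rw [ee, pair_le_iff] at hle
    obtain ⟨h1, h2⟩ := hle
    rw [pair_apply] at h1 h2
    apply hne
    constructor
    · by_contra hcon
      rw [if_neg (fun h => hcon (congrArg Prod.snd h).symm), if_neg (by simp)] at h1
      omega
    · by_contra hcon
      rw [if_neg (by simp), if_neg (fun h => hcon (congrArg Prod.snd h).symm)] at h2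
      omega
  · intro h0
    have := hval
    rw [h0] at this
    simp only [LinearMap.zero_apply] at this
    have hmem : (MvPolynomial.monomial (dd P D U) (1:k) : SR k P) ∈ L2P k P := by
      rw [← Ideal.Quotient.eq_zero_iff_mem]
      exact this.symm
    rw [mono_mem_iff] at hmem
    obtain ⟨u, v, huv, h1, h2⟩ := hmem
    rw [dd_apply] at h1 h2
    have hu : u ∈ D := by
      by_contra hcon
      rw [if_neg (by simp [hcon]), if_neg (by simp)] at h1
      omega
    have hv : v ∈ U := by
      by_contra hcon
      rw [if_neg (by simp), if_neg (by simp [hcon])] at h2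
      omega
    exact hDU u hu v hv huv


end LP2
end
end

section
/- Let φ ∈ Hom_S(L(2,P), S/L(2,P)) and let p ≤ q in P. Write φ(p_1 q_2) as the class of the unique k-linear combination of monomials not belonging to L(2,P). Then every monomial m appearing with nonzero coefficient satisfies: (1) if p ≠ q then gcd(p_1 q_2, m) ≠ 1; (2) if p = q then either gcd(p_1 p_2, m) ≠ 1, or both of the following hold: for every r < p there exists t ≥ r with t_2 dividing m, and for every r' > p there exists s ≤ r' with s_1 dividing m. -/
set_option linter.unusedSectionVars false
open scoped Classical

noncomputable section

namespace LP2

variable (k : Type) [Field k] (P : Type) [Fintype P] [PartialOrder P]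

open MvPolynomial Finsupp

lemma single_add_single_le (a b : P) (m : (Fin 2 × P) →₀ ℕ) :
    Finsupp.single ((0:Fin 2), a) 1 + Finsupp.single ((1:Fin 2), b) 1 ≤ m ↔
      m ((0:Fin 2), a) ≠ 0 ∧ m ((1:Fin 2), b) ≠ 0 := by
  constructor
  · intro hle
    have h1 := hle ((0:Fin 2), a)
    have h2 := hle ((1:Fin 2), b)
    simp [Finsupp.single_apply, Prod.ext_iff] at h1 h2
    omega
  · rintro ⟨h1, h2⟩
    intro x
    rcases eq_or_ne x ((0:Fin 2), a) with rfl | hx1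
    · simp [Finsupp.single_apply, Prod.ext_iff]; omega
    · rcases eq_or_ne x ((1:Fin 2), b) with rfl | hx2
      · simp [Finsupp.single_apply, Prod.ext_iff]; omega
      · simp [Finsupp.single_apply, Ne.symm hx1, Ne.symm hx2]

lemma mem_L2P_iff (f : SR k P) :
    f ∈ L2P k P ↔ ∀ m ∈ f.support, ∃ a b : P, a ≤ b ∧
      m ((0:Fin 2), a) ≠ 0 ∧ m ((1:Fin 2), b) ≠ 0 := by
  have hset : {f : SR k P | ∃ p q : P, p ≤ q ∧
      f = MvPolynomial.X ((0 : Fin 2), p) * MvPolynomial.X ((1 : Fin 2), q)} =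
      (fun s => monomial s (1:k)) '' {s | ∃ a b : P, a ≤ b ∧
        s = Finsupp.single ((0:Fin 2), a) 1 + Finsupp.single ((1:Fin 2), b) 1} := by
    ext f
    constructor
    · rintro ⟨a, b, hab, rfl⟩
      exact ⟨_, ⟨a, b, hab, rfl⟩, by simp [X, monomial_mul]⟩
    · rintro ⟨s, ⟨a, b, hab, rfl⟩, rfl⟩
      exact ⟨a, b, hab, by simp [X, monomial_mul]⟩
  rw [L2P, hset, mem_ideal_span_monomial_image]
  constructor
  · intro H m hm
    obtain ⟨si, ⟨a, b, hab, rfl⟩, hle⟩ := H m hm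
    exact ⟨a, b, hab, (single_add_single_le P a b m).1 hle⟩
  · intro H m hm
    obtain ⟨a, b, hab, h1, h2⟩ := H m hm
    exact ⟨_, ⟨a, b, hab, rfl⟩, (single_add_single_le P a b m).2 ⟨h1, h2⟩⟩

lemma syzygy
    (φ : (L2P k P : Submodule (SR k P) (SR k P)) →ₗ[SR k P] (SR k P ⧸ L2P k P))
    {a b c d : P} (hab : a ≤ b) (hcd : c ≤ d) (v w : Fin 2 × P)
    (hrel : (MvPolynomial.X v * (MvPolynomial.X ((0:Fin 2), a) * MvPolynomial.X ((1:Fin 2), b))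
      : SR k P)
      = MvPolynomial.X w * (MvPolynomial.X ((0:Fin 2), c) * MvPolynomial.X ((1:Fin 2), d)))
    {g g' : SR k P}
    (hg : Ideal.Quotient.mk (L2P k P) g = φ ⟨_, gen_mem_L2P k P hab⟩)
    (hg' : Ideal.Quotient.mk (L2P k P) g' = φ ⟨_, gen_mem_L2P k P hcd⟩) :
    MvPolynomial.X v * g - MvPolynomial.X w * g' ∈ L2P k P := by
  rw [← Ideal.Quotient.eq_zero_iff_mem]
  have hkey : φ ((MvPolynomial.X v : SR k P) • ⟨_, gen_mem_L2P k P hab⟩)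
      = φ ((MvPolynomial.X w : SR k P) • ⟨_, gen_mem_L2P k P hcd⟩) := by
    congr 1
    exact Subtype.ext (by simpa [smul_eq_mul] using hrel)
  have h1 : Ideal.Quotient.mk (L2P k P) (MvPolynomial.X v * g)
      = (MvPolynomial.X v : SR k P) • (Ideal.Quotient.mk (L2P k P) g) := rfl
  have h2 : Ideal.Quotient.mk (L2P k P) (MvPolynomial.X w * g')
      = (MvPolynomial.X w : SR k P) • (Ideal.Quotient.mk (L2P k P) g') := rfl
  rw [map_sub, h1, h2, hg, hg', ← map_smul, ← map_smul, hkey, sub_self]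

lemma step {g g' : SR k P} (v w : Fin 2 × P)
    (hd : MvPolynomial.X v * g - MvPolynomial.X w * g' ∈ L2P k P)
    {m : (Fin 2 × P) →₀ ℕ} (hm : m ∈ g.support) :
    (Finsupp.single v (1:ℕ) + m) w ≠ 0 ∨
      ∃ a b : P, a ≤ b ∧ (Finsupp.single v (1:ℕ) + m) ((0:Fin 2), a) ≠ 0 ∧
        (Finsupp.single v (1:ℕ) + m) ((1:Fin 2), b) ≠ 0 := by
  set m' := Finsupp.single v (1:ℕ) + m with hm'
  by_cases hc : MvPolynomial.coeff m' (MvPolynomial.X w * g') = 0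
  · right
    have hcv : MvPolynomial.coeff m' (MvPolynomial.X v * g) = g.coeff m := coeff_X_mul m v g
    have hne : MvPolynomial.coeff m' (MvPolynomial.X v * g - MvPolynomial.X w * g') ≠ 0 := by
      rw [coeff_sub, hcv, hc, sub_zero]
      exact MvPolynomial.mem_support_iff.mp hm
    exact (mem_L2P_iff k P _).mp hd m' (MvPolynomial.mem_support_iff.mpr hne)
  · left
    rw [coeff_X_mul'] at hc
    split_ifs at hc with hws
    · exact Finsupp.mem_support_iff.mp hws
    · exact absurd rfl hc

/-- Let `φ ∈ Hom_S(L(2,P), S/L(2,P))`, let `p ≤ q`, and write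
`φ(p₁q₂)` as the class of the (unique) `k`-linear combination `g` of monomials not in
`L(2,P)`.  Then every monomial `m` in the support of `g` satisfies:
(1) if `p ≠ q` then `gcd(p₁q₂, m) ≠ 1` (i.e. `p₁ ∣ m` or `q₂ ∣ m`);
(2) if `p = q` then either `gcd(p₁p₂, m) ≠ 1`, or for every `r < p` there is `t ≥ r`
with `t₂ ∣ m` and for every `r' > p` there is `s ≤ r'` with `s₁ ∣ m`. -/
theorem support_conditions
    (φ : (L2P k P : Submodule (SR k P) (SR k P)) →ₗ[SR k P] (SR k P ⧸ L2P k P))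
    (p q : P) (h : p ≤ q) (g : SR k P)
    (hg : Ideal.Quotient.mk (L2P k P) g =
      φ ⟨MvPolynomial.X ((0 : Fin 2), p) * MvPolynomial.X ((1 : Fin 2), q),
          gen_mem_L2P k P h⟩)
    (hgL : ∀ m ∈ g.support, (MvPolynomial.monomial m (1 : k)) ∉ L2P k P) :
    ∀ m ∈ g.support,
      (p ≠ q → ¬ (m ((0 : Fin 2), p) = 0 ∧ m ((1 : Fin 2), q) = 0)) ∧
      (p = q →
        (¬ (m ((0 : Fin 2), p) = 0 ∧ m ((1 : Fin 2), p) = 0)) ∨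
        ((∀ r : P, r < p → ∃ t : P, r ≤ t ∧ m ((1 : Fin 2), t) ≠ 0) ∧
         (∀ r' : P, p < r' → ∃ s : P, s ≤ r' ∧ m ((0 : Fin 2), s) ≠ 0))) := by
  intro m hm
  -- m itself is not in L(2,P):
  have hNL : ∀ a b : P, a ≤ b → m ((0:Fin 2), a) ≠ 0 → m ((1:Fin 2), b) ≠ 0 → False := by
    intro a b hab h1 h2
    refine hgL m hm ((mem_L2P_iff k P _).mpr ?_)
    intro m' hm'
    have : m' = m := by
      rw [MvPolynomial.support_monomial] at hm'
      simpa [one_ne_zero] using hm'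
    exact this ▸ ⟨a, b, hab, h1, h2⟩
  constructor
  · -- case p ≠ q
    rintro hpq ⟨h0, h1⟩
    obtain ⟨g₁, hg₁⟩ := Ideal.Quotient.mk_surjective
      (φ ⟨_, gen_mem_L2P k P (le_refl p)⟩)
    obtain ⟨g₂, hg₂⟩ := Ideal.Quotient.mk_surjective
      (φ ⟨_, gen_mem_L2P k P (le_refl q)⟩)
    -- p₂ · (p₁q₂) = q₂ · (p₁p₂)
    have hd1 := syzygy k P φ h (le_refl p) ((1:Fin 2), p) ((1:Fin 2), q) (by ring) hg hg₁
    -- q₁ · (p₁q₂) = p₁ · (q₁q₂)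
    have hd2 := syzygy k P φ h (le_refl q) ((0:Fin 2), q) ((0:Fin 2), p) (by ring) hg hg₂
    -- from hd1: ∃ a ≤ p with m(0,a) ≠ 0
    have hA : ∃ a : P, a ≤ p ∧ m ((0:Fin 2), a) ≠ 0 := by
      rcases step k P _ _ hd1 hm with hl | ⟨a, b, hab, ha, hb⟩
      · exact absurd (by simp [Finsupp.single_apply, Prod.ext_iff, hpq, h1]) hl
      · have ha' : m ((0:Fin 2), a) ≠ 0 := by
          simpa [Finsupp.single_apply, Prod.ext_iff] using ha
        rcases eq_or_ne b p with rfl | hbp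
        · exact ⟨a, hab, ha'⟩
        · have hb' : m ((1:Fin 2), b) ≠ 0 := by
            simpa [Finsupp.single_apply, Prod.ext_iff, Ne.symm hbp] using hb
          exact absurd (hNL a b hab ha' hb') (fun x => x)
    -- from hd2: ∃ b ≥ q with m(1,b) ≠ 0
    have hB : ∃ b : P, q ≤ b ∧ m ((1:Fin 2), b) ≠ 0 := by
      rcases step k P _ _ hd2 hm with hl | ⟨a, b, hab, ha, hb⟩
      · exact absurd (by simp [Finsupp.single_apply, Prod.ext_iff, Ne.symm hpq, h0]) hl
      · have hb' : m ((1:Fin 2), b) ≠ 0 := by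
          simpa [Finsupp.single_apply, Prod.ext_iff] using hb
        rcases eq_or_ne a q with rfl | haq
        · exact ⟨b, hab, hb'⟩
        · have ha' : m ((0:Fin 2), a) ≠ 0 := by
            simpa [Finsupp.single_apply, Prod.ext_iff, Ne.symm haq] using ha
          exact absurd (hNL a b hab ha' hb') (fun x => x)
    obtain ⟨a, hap, ha⟩ := hA
    obtain ⟨b, hqb, hb⟩ := hB
    exact hNL a b (le_trans hap (le_trans h hqb)) ha hb
  · -- case p = q
    rintro rfl
    by_cases h01 : m ((0:Fin 2), p) = 0 ∧ m ((1:Fin 2), p) = 0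
    · right
      obtain ⟨h0, h1⟩ := h01
      constructor
      · intro r hr
        obtain ⟨gr, hgr⟩ := Ideal.Quotient.mk_surjective
          (φ ⟨_, gen_mem_L2P k P hr.le⟩)
        -- r₁ · (p₁p₂) = p₁ · (r₁p₂)
        have hd := syzygy k P φ h hr.le ((0:Fin 2), r) ((0:Fin 2), p) (by ring) hg hgr
        rcases step k P _ _ hd hm with hl | ⟨a, b, hab, ha, hb⟩
        · exact absurd (by simp [Finsupp.single_apply, Prod.ext_iff, hr.ne, h0]) hl
        · have hb' : m ((1:Fin 2), b) ≠ 0 := by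
            simpa [Finsupp.single_apply, Prod.ext_iff] using hb
          rcases eq_or_ne a r with rfl | har
          · exact ⟨b, hab, hb'⟩
          · have ha' : m ((0:Fin 2), a) ≠ 0 := by
              simpa [Finsupp.single_apply, Prod.ext_iff, Ne.symm har] using ha
            exact absurd (hNL a b hab ha' hb') (fun x => x)
      · intro r' hr'
        obtain ⟨gr, hgr⟩ := Ideal.Quotient.mk_surjective
          (φ ⟨_, gen_mem_L2P k P hr'.le⟩)
        -- r'₂ · (p₁p₂) = p₂ · (p₁r'₂)
        have hd := syzygy k P φ h hr'.le ((1:Fin 2), r') ((1:Fin 2), p) (by ring) hg hgr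
        rcases step k P _ _ hd hm with hl | ⟨a, b, hab, ha, hb⟩
        · exact absurd (by simp [Finsupp.single_apply, Prod.ext_iff, hr'.ne', h1]) hl
        · have ha' : m ((0:Fin 2), a) ≠ 0 := by
            simpa [Finsupp.single_apply, Prod.ext_iff] using ha
          rcases eq_or_ne b r' with rfl | hbr
          · exact ⟨a, hab, ha'⟩
          · have hb' : m ((1:Fin 2), b) ≠ 0 := by
              simpa [Finsupp.single_apply, Prod.ext_iff, Ne.symm hbr] using hb
            exact absurd (hNL a b hab ha' hb') (fun x => x)
    · exact Or.inl h01

end LP2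
end
end

section
/- Let I ⊆ k[x_1,…,x_n] be an ideal and let τ: k[x_1,…,x_n] → k[x_1,…,x_n,t_1,…,t_n] be the k-algebra homomorphism determined by x_i ↦ x_i + t_i. Let Ĩ be the ideal of k[x_1,…,x_n,t_1,…,t_n] generated by τ(I). Then: (1) the quotient k[x_1,…,x_n,t_1,…,t_n]/Ĩ is flat as a module over k[t_1,…,t_n]; (2) modulo the ideal (t_1,…,t_n)², the ideal generated by Ĩ in k[x,t]/(t_1,…,t_n)² equals the ideal generated by the elements f + Σ_{i=1}^n t_i·(∂f/∂x_i) for f ∈ I; in particular its fiber at t = 0 is k[x]/I. -/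
set_option linter.unusedSectionVars false
open scoped Classical

noncomputable section

namespace LP2

variable (k : Type) [Field k] (n : ℕ)

/-- `k[x₁,…,xₙ,t₁,…,tₙ]`: `Sum.inl` indexes the `x`-variables, `Sum.inr` the
`t`-variables. -/
abbrev XT := MvPolynomial (Fin n ⊕ Fin n) k

/-- The `k`-algebra homomorphism `τ : k[x] → k[x,t]`, `xᵢ ↦ xᵢ + tᵢ`. -/
def tau : MvPolynomial (Fin n) k →ₐ[k] XT k n :=
  MvPolynomial.aeval (fun i => MvPolynomial.X (Sum.inl i) + MvPolynomial.X (Sum.inr i))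

/-- The inclusion `k[x] → k[x,t]`. -/
def embx : MvPolynomial (Fin n) k →ₐ[k] XT k n := MvPolynomial.rename Sum.inl

/-- The projection `k[x,t] → k[x]` sending every `tᵢ` to `0`. -/
def killt : XT k n →ₐ[k] MvPolynomial (Fin n) k :=
  MvPolynomial.aeval (Sum.elim MvPolynomial.X (fun _ => 0))

/-- The ideal `(t₁,…,tₙ)` of `k[x,t]`. -/
def Tideal : Ideal (XT k n) :=
  Ideal.span (Set.range fun i : Fin n => (MvPolynomial.X (Sum.inr i) : XT k n))

open MvPolynomial

section Aux

open scoped TensorProduct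

set_option synthInstance.maxHeartbeats 1000000 in
set_option maxHeartbeats 1000000 in
lemma LP2flatBQ (I : Ideal (MvPolynomial (Fin n) k)) :
    Module.Flat (MvPolynomial (Fin n) k)
      ((MvPolynomial (Fin n) k) ⊗[k] (MvPolynomial (Fin n) k ⧸ I)) :=
  Module.Flat.baseChange k _ (MvPolynomial (Fin n) k ⧸ I)

variable (Q : Type) [CommRing Q] [Algebra k Q]

lemma LP2e0_compat (b : MvPolynomial (Fin n) k) :
    ((Algebra.TensorProduct.comm k (MvPolynomial (Fin n) k) Q).trans ((algebraTensorAlgEquiv k Q).restrictScalars k) : MvPolynomial (Fin n) k ⊗[k] Q ≃ₐ[k] MvPolynomial (Fin n) Q)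
      (algebraMap (MvPolynomial (Fin n) k) (MvPolynomial (Fin n) k ⊗[k] Q) b)
    = map (algebraMap k Q) b := by
  rw [Algebra.TensorProduct.algebraMap_apply]
  simp

lemma LP2F_compat (I : Ideal (MvPolynomial (Fin n) k)) (a : MvPolynomial (Fin n) k) :
    (MvPolynomial.quotientEquivQuotientMvPolynomial I (σ := Fin n))
        (map (algebraMap k (MvPolynomial (Fin n) k ⧸ I)) a)
      = Ideal.Quotient.mk _ (map (algebraMap k (MvPolynomial (Fin n) k)) a) := by
  have h : ((MvPolynomial.quotientEquivQuotientMvPolynomial I (σ := Fin n)).toAlgHom.restrictScalars k).comp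
        (mapAlgHom (Algebra.ofId k (MvPolynomial (Fin n) k ⧸ I))) =
      ((Ideal.Quotient.mkₐ k (Ideal.map C I :
          Ideal (MvPolynomial (Fin n) (MvPolynomial (Fin n) k)))).comp
        (mapAlgHom (Algebra.ofId k (MvPolynomial (Fin n) k)))) := by
    apply algHom_ext; intro i
    simp [quotientEquivQuotientMvPolynomial]
  exact DFunLike.congr_fun h a

end Aux

/-- Transfer of flatness along a ring equivalence compatible with the algebra maps. -/
theorem LP2flat_of_ringEquiv {B M N : Type} [CommRing B] [CommRing M] [CommRing N]
    [Algebra B M] [Algebra B N] (e : M ≃+* N)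
    (h : ∀ b, e (algebraMap B M b) = algebraMap B N b) (hf : Module.Flat B M) :
    Module.Flat B N := by
  have hsm : ∀ (b : B) (m : M), e (b • m) = b • e m := fun b m => by
    rw [Algebra.smul_def, map_mul, h, ← Algebra.smul_def]
  let el : M ≃ₗ[B] N := { e.toAddEquiv with map_smul' := hsm }
  exact Module.Flat.of_linearEquiv el.symm

/-- the substitution endomorphism `x ↦ x + t, t ↦ t` -/
def sp : XT k n →ₐ[k] XT k n :=
  aeval (Sum.elim (fun i => X (Sum.inl i) + X (Sum.inr i)) (fun i => X (Sum.inr i)))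

/-- the substitution endomorphism `x ↦ x - t, t ↦ t` -/
def sm : XT k n →ₐ[k] XT k n :=
  aeval (Sum.elim (fun i => X (Sum.inl i) - X (Sum.inr i)) (fun i => X (Sum.inr i)))

lemma sm_sp : (sm k n).comp (sp k n) = AlgHom.id k _ := by
  apply algHom_ext; rintro (i | i) <;> simp [sm, sp]

lemma sp_sm : (sp k n).comp (sm k n) = AlgHom.id k _ := by
  apply algHom_ext; rintro (i | i) <;> simp [sm, sp]

/-- the substitution automorphism `x ↦ x - t, t ↦ t` as a ring equivalence -/
def sigma : XT k n ≃+* XT k n :=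
  (AlgEquiv.ofAlgHom (sm k n) (sp k n) (sm_sp k n) (sp_sm k n)).toRingEquiv

lemma sm_tau : (sm k n).comp (tau k n) = embx k n := by
  apply algHom_ext; intro i; simp [sm, tau, embx]

lemma sm_rename : (sm k n).comp (rename Sum.inr) = rename Sum.inr := by
  apply algHom_ext; intro i; simp [sm]

/-- `k[x,t] ≃ k[x][t]` with the `t`-variables outside. -/
def Phi : XT k n ≃ₐ[k] MvPolynomial (Fin n) (MvPolynomial (Fin n) k) :=
  (renameEquiv k (Equiv.sumComm (Fin n) (Fin n))).trans (sumAlgEquiv k (Fin n) (Fin n))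

lemma Phi_embx : (Phi k n).toAlgHom.comp (embx k n) =
    IsScalarTower.toAlgHom k (MvPolynomial (Fin n) k) _ := by
  apply algHom_ext; intro i
  simp [Phi, embx, algebraMap_eq]

lemma Phi_rename_inr (a : MvPolynomial (Fin n) k) :
    Phi k n (rename Sum.inr a) = map (algebraMap k (MvPolynomial (Fin n) k)) a := by
  have h : (Phi k n).toAlgHom.comp ((rename Sum.inr : _ →ₐ[k] XT k n)) =
      mapAlgHom (Algebra.ofId k (MvPolynomial (Fin n) k)) := by
    apply algHom_ext; intro i
    simp [Phi, mapAlgHom_apply, Algebra.ofId]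
  exact DFunLike.congr_fun h a

lemma t_mem (i : Fin n) : (MvPolynomial.X (Sum.inr i) : XT k n) ∈ Tideal k n :=
  Ideal.subset_span ⟨i, rfl⟩

lemma key (f : MvPolynomial (Fin n) k) :
    tau k n f - (embx k n f +
      ∑ i : Fin n, MvPolynomial.X (Sum.inr i) * embx k n (MvPolynomial.pderiv i f))
      ∈ (Tideal k n) ^ 2 := by
  induction f using MvPolynomial.induction_on with
  | C a =>
      simp [tau, embx]
  | add p q hp hq =>
      have := Ideal.add_mem _ hp hq
      convert this using 1
      simp only [map_add, mul_add, Finset.sum_add_distrib]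
      ring
  | mul_X p j hp =>
      have h2 : (MvPolynomial.X (Sum.inr j) : XT k n) *
          (∑ i : Fin n, MvPolynomial.X (Sum.inr i) * embx k n (MvPolynomial.pderiv i p))
          ∈ (Tideal k n) ^ 2 := by
        rw [Finset.mul_sum]
        refine Ideal.sum_mem _ fun i _ => ?_
        rw [sq, mul_comm (MvPolynomial.X (Sum.inr j))]
        exact Ideal.mul_mem_mul (Ideal.mul_mem_right _ _ (t_mem k n i)) (t_mem k n j)
      have h1 := Ideal.mul_mem_right
        (MvPolynomial.X (Sum.inl j) + MvPolynomial.X (Sum.inr j)) _ hp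
      have hmem := Ideal.add_mem _ h1 h2
      convert hmem using 1
      have e1 : ∀ i : Fin n, MvPolynomial.X (Sum.inr i) *
            embx k n (MvPolynomial.pderiv i (p * MvPolynomial.X j))
          = MvPolynomial.X (Sum.inr i) * embx k n (MvPolynomial.pderiv i p)
              * MvPolynomial.X (Sum.inl j)
            + (if i = j then MvPolynomial.X (Sum.inr i) * embx k n p else 0) := by
        intro i
        rw [MvPolynomial.pderiv_mul]
        by_cases h : i = j
        · subst h
          simp [MvPolynomial.pderiv_X_self, embx]
          ring
        · simp [MvPolynomial.pderiv_X, Pi.single_eq_of_ne (Ne.symm h), h, embx]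
          ring
      rw [Finset.sum_congr rfl (fun i _ => e1 i), Finset.sum_add_distrib,
        Finset.sum_ite_eq' Finset.univ j]
      simp only [Finset.mem_univ, if_true, map_mul, tau, embx, MvPolynomial.aeval_X,
        MvPolynomial.rename_X]
      rw [← Finset.sum_mul]
      ring

open scoped TensorProduct in
set_option maxHeartbeats 2000000 in
set_option synthInstance.maxHeartbeats 1000000 in
/-- Let `I ⊆ k[x₁,…,xₙ]`, `τ : k[x] → k[x,t]` the map `xᵢ ↦ xᵢ + tᵢ`,
and `Ĩ ⊆ k[x,t]` the ideal generated by `τ(I)`.  Then: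
(1) `k[x,t]/Ĩ` is flat as a `k[t₁,…,tₙ]`-module;
(2) modulo `(t₁,…,tₙ)²`, the ideal `Ĩ` equals the ideal generated by the elements
`f + ∑ᵢ tᵢ·(∂f/∂xᵢ)` for `f ∈ I`;  in particular
(3) the fiber of `Ĩ` at `t = 0` is `I`, i.e. the image of `Ĩ` under `t ↦ 0` is `I`. -/
theorem tau_deformation (I : Ideal (MvPolynomial (Fin n) k)) :
    (letI : Algebra (MvPolynomial (Fin n) k) (XT k n ⧸ Ideal.map (tau k n).toRingHom I) :=
      (((Ideal.Quotient.mkₐ k (Ideal.map (tau k n).toRingHom I)).comp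
        (MvPolynomial.rename (Sum.inr : Fin n → Fin n ⊕ Fin n))).toRingHom).toAlgebra
     Module.Flat (MvPolynomial (Fin n) k) (XT k n ⧸ Ideal.map (tau k n).toRingHom I)) ∧
    Ideal.map (Ideal.Quotient.mk ((Tideal k n) ^ 2)) (Ideal.map (tau k n).toRingHom I) =
      Ideal.map (Ideal.Quotient.mk ((Tideal k n) ^ 2))
        (Ideal.span {g : XT k n | ∃ f ∈ I,
          g = embx k n f +
            ∑ i : Fin n,
              MvPolynomial.X (Sum.inr i) * embx k n (MvPolynomial.pderiv i f)}) ∧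
    Ideal.map (killt k n).toRingHom (Ideal.map (tau k n).toRingHom I) = I := by
  refine ⟨?_, ?_, ?_⟩
  · -- flatness
    set B := MvPolynomial (Fin n) k
    set Q := (MvPolynomial (Fin n) k ⧸ I)
    set Itld := Ideal.map (tau k n).toRingHom I with hItld
    set J := Ideal.map (embx k n).toRingHom I with hJ
    -- the chain of ring equivalences
    have hIJ : J = Ideal.map (↑(sigma k n) : XT k n →+* XT k n) Itld := by
      rw [hItld, Ideal.map_map, hJ]
      congr 1
      exact (RingHom.ext fun x => (DFunLike.congr_fun (sm_tau k n) x :)).symm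
    have hJC : Ideal.map (C : MvPolynomial (Fin n) k →+* MvPolynomial (Fin n) (MvPolynomial (Fin n) k)) I =
        Ideal.map (↑(Phi k n).toRingEquiv : XT k n →+* _) J := by
      rw [hJ, Ideal.map_map]
      congr 1
      refine (RingHom.ext fun x => ?_).symm
      have := DFunLike.congr_fun (Phi_embx k n) x
      simpa [algebraMap_eq] using this
    let e1 := Ideal.quotientEquiv Itld J (sigma k n) hIJ
    let e2 := Ideal.quotientEquiv J (Ideal.map (C : MvPolynomial (Fin n) k →+* MvPolynomial (Fin n) (MvPolynomial (Fin n) k)) I) (Phi k n).toRingEquiv hJC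
    let F := MvPolynomial.quotientEquivQuotientMvPolynomial (σ := Fin n) I
    let E := (e1.trans e2).trans F.toRingEquiv.symm
    have hE : ∀ b : B, E (Ideal.Quotient.mk Itld (rename Sum.inr b))
        = map (algebraMap k Q) b := by
      intro b
      show F.toRingEquiv.symm (e2 (e1 (Ideal.Quotient.mk Itld (rename Sum.inr b)))) = _
      rw [show e1 (Ideal.Quotient.mk Itld (rename Sum.inr b))
          = Ideal.Quotient.mk J (sigma k n (rename Sum.inr b)) from
        Ideal.quotientEquiv_mk Itld J (sigma k n) hIJ _]
      have hsm : sigma k n (rename Sum.inr b) = rename Sum.inr b :=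
        DFunLike.congr_fun (sm_rename k n) b
      rw [hsm]
      rw [show e2 (Ideal.Quotient.mk J (rename Sum.inr b))
          = Ideal.Quotient.mk _ ((Phi k n).toRingEquiv (rename Sum.inr b)) from
        Ideal.quotientEquiv_mk J _ (Phi k n).toRingEquiv hJC _]
      have hPhi : (Phi k n).toRingEquiv (rename Sum.inr b)
          = map (algebraMap k (MvPolynomial (Fin n) k)) b := Phi_rename_inr k n b
      rw [hPhi]
      have hF : F.toRingEquiv (map (algebraMap k Q) b)
          = Ideal.Quotient.mk _ (map (algebraMap k (MvPolynomial (Fin n) k)) b) :=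
        LP2F_compat k n I b
      rw [← hF, RingEquiv.symm_apply_apply]
    have hMflat : @Module.Flat B (MvPolynomial (Fin n) Q) _ _
        (@Algebra.toModule _ _ _ _
          ((MvPolynomial.map (algebraMap k Q) : B →+* MvPolynomial (Fin n) Q)).toAlgebra) := by
      refine @LP2flat_of_ringEquiv B (MvPolynomial (Fin n) k ⊗[k] Q)
        (MvPolynomial (Fin n) Q) _ _ _ _
        ((MvPolynomial.map (algebraMap k Q) : B →+* MvPolynomial (Fin n) Q)).toAlgebra
        (((Algebra.TensorProduct.comm k (MvPolynomial (Fin n) k) Q).trans ((algebraTensorAlgEquiv k Q).restrictScalars k) :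
          MvPolynomial (Fin n) k ⊗[k] Q ≃ₐ[k] MvPolynomial (Fin n) Q).toRingEquiv)
        (fun b => ?_) (LP2flatBQ k n I)
      rw [RingHom.algebraMap_toAlgebra]
      exact LP2e0_compat k n Q b
    letI algN : Algebra B (XT k n ⧸ Itld) :=
      (((Ideal.Quotient.mkₐ k Itld).comp
        (MvPolynomial.rename (Sum.inr : Fin n → Fin n ⊕ Fin n))).toRingHom).toAlgebra
    exact @LP2flat_of_ringEquiv B (MvPolynomial (Fin n) Q) (XT k n ⧸ Itld) _ _ _
      ((MvPolynomial.map (algebraMap k Q) : B →+* MvPolynomial (Fin n) Q)).toAlgebra algN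
      E.symm (fun b => by
        rw [RingHom.algebraMap_toAlgebra, RingHom.algebraMap_toAlgebra]
        show E.symm (map (algebraMap k Q) b) = _
        rw [← hE b, RingEquiv.symm_apply_apply]
        rfl) hMflat
  · -- ideal equality modulo T²
    have hS : {g : XT k n | ∃ f ∈ I,
        g = embx k n f + ∑ i : Fin n,
          MvPolynomial.X (Sum.inr i) * embx k n (MvPolynomial.pderiv i f)} =
        (fun f => embx k n f + ∑ i : Fin n,
          MvPolynomial.X (Sum.inr i) * embx k n (MvPolynomial.pderiv i f)) '' (I : Set _) := by
      ext g
      simp only [Set.mem_setOf_eq, Set.mem_image, SetLike.mem_coe]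
      exact ⟨fun ⟨f, hf, h⟩ => ⟨f, hf, h.symm⟩, fun ⟨f, hf, h⟩ => ⟨f, hf, h.symm⟩⟩
    have hmapI : Ideal.map (tau k n).toRingHom I =
        Ideal.span ((tau k n) '' (I : Set _)) := rfl
    rw [hmapI, hS, Ideal.map_span, Ideal.map_span, Set.image_image, Set.image_image]
    congr 1
    apply Set.image_congr
    intro f _
    rw [Ideal.Quotient.eq]
    exact key k n f
  · -- fiber at t = 0
    rw [Ideal.map_map]
    have h : (killt k n).toRingHom.comp (tau k n).toRingHom = RingHom.id _ := by
      have h2 : (killt k n).comp (tau k n) = AlgHom.id k _ := by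
        apply MvPolynomial.algHom_ext
        intro i
        simp [killt, tau]
      exact congrArg AlgHom.toRingHom h2
    rw [h, Ideal.map_id]

end LP2
end
end
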